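/- For every n and k with k ∣ n, there exists a set S of n polygonal curves in ℝ^1, each with exactly k vertices, and a family of (n/k)^k query curves, each with k vertices, such that any two distinct query curves have different sets of nearest neighbors in S under the discrete Fréchet distance. Consequently the Voronoi diagram of S under the discrete Fréchet distance has at least (n/k)^k regions. -/

import Mathlib

open Real

noncomputable section

abbrev Pt (d : ℕ) := EuclideanSpace ℝ (Fin d)

/-- One step of a coupling: advance the first and/or the second index by exactly 1. -/
def CouplingStep (a b : ℕ × ℕ) : Prop :=
  (b.1 = a.1 + 1 ∧ b.2 = a.2) ∨ (b.1 = a.1 ∧ b.2 = a.2 + 1) ∨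
    (b.1 = a.1 + 1 ∧ b.2 = a.2 + 1)

/-- A coupling between a curve with `k` vertices and one with `l` vertices
(0-based indices): starts at `(0,0)`, ends at `(k-1, l-1)`, monotone unit steps. -/
def IsCoupling (k l : ℕ) (c : List (ℕ × ℕ)) : Prop :=
  c.head? = some (0, 0) ∧ c.getLast? = some (k - 1, l - 1) ∧
    c.Chain' CouplingStep ∧ ∀ ij ∈ c, ij.1 < k ∧ ij.2 < l

/-- The maximum distance over the coupled pairs of a coupling. -/
def couplingCost {d : ℕ} (P Q : List (Pt d)) (c : List (ℕ × ℕ)) : ℝ :=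
  c.foldr (fun ij acc => max (dist (P.getD ij.1 0) (Q.getD ij.2 0)) acc) 0

/-- The discrete Fréchet distance between two polygonal curves, given as lists
of their vertices. -/
def dDF {d : ℕ} (P Q : List (Pt d)) : ℝ :=
  sInf { m : ℝ | ∃ c, IsCoupling P.length Q.length c ∧ m = couplingCost P Q c }

/-- The set of nearest neighbors of a query curve `Q` in a finite set `S` of
curves, under the discrete Fréchet distance. -/
def NN {d : ℕ} (S : Finset (List (Pt d))) (Q : List (Pt d)) : Set (List (Pt d)) :=
  { P | P ∈ S ∧ ∀ P' ∈ S, dDF Q P ≤ dDF Q P' }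

/-- The point of `ℝ²` with given coordinates. -/
def e2 (x y : ℝ) : Pt 2 := (WithLp.equiv 2 (Fin 2 → ℝ)).symm ![x, y]

/-- The point of `ℝ¹` with given coordinate. -/
def e1 (x : ℝ) : Pt 1 := (WithLp.equiv 2 (Fin 1 → ℝ)).symm ![x]


/-!
If the vertices of all curves are spread far apart, vertex `i` near `L * i` with small offsets,
then only the diagonal coupling is cheap, and the discrete Fréchet distance becomes the
sup distance between the offset vectors. The problem becomes one about `ℓ∞` on `ℤ^k`.

For `k = K + 2` and `m = n / k`, a query encodes `f : Fin k → Fin m`. Its last coordinate is an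
anchor at height `m + m * f last`, which puts every site at distance at least that level, so the
nearest neighbours are exactly the sites that do not exceed it in any coordinate. The `m` sites on
each of the first `K + 1` coordinates detect the thresholds `f j ≤ t`. The last `m` sites live on
coordinate `0` and detect `t ≤ f last`; the factor `m` in the level keeps them from interfering
with `f 0`. Together these thresholds recover `f`. For `k = 1` the sites and queries are just
`n` points.
-/

open Finset Function

section Coupling

variable {d : ℕ}

lemma couplingCost_nonneg (P Q : List (Pt d)) (c : List (ℕ × ℕ)) : 0 ≤ couplingCost P Q c := by
  induction c with
  | nil => exact le_rfl
  | cons _ _ ih => exact ih.trans (le_max_right _ _)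

lemma dist_getD_le_couplingCost (P Q : List (Pt d)) {c : List (ℕ × ℕ)} {ij : ℕ × ℕ}
    (h : ij ∈ c) : dist (P.getD ij.1 0) (Q.getD ij.2 0) ≤ couplingCost P Q c := by
  induction c with
  | nil => cases h
  | cons _ _ ih =>
    rcases List.mem_cons.1 h with rfl | h
    · exact le_max_left _ _
    · exact (ih h).trans (le_max_right _ _)

lemma couplingCost_le (P Q : List (Pt d)) {c : List (ℕ × ℕ)} {v : ℝ} (hv : 0 ≤ v)
    (h : ∀ ij ∈ c, dist (P.getD ij.1 0) (Q.getD ij.2 0) ≤ v) : couplingCost P Q c ≤ v := by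
  induction c with
  | nil => exact hv
  | cons ij _ ih =>
    exact max_le (h ij List.mem_cons_self) (ih fun ij' h' => h ij' (List.mem_cons_of_mem _ h'))

def diagCoupling (k : ℕ) : List (ℕ × ℕ) := (List.range k).map fun i => (i, i)

lemma isCoupling_diagCoupling {k : ℕ} (hk : 0 < k) : IsCoupling k k (diagCoupling k) := by
  obtain ⟨k, rfl⟩ := Nat.exists_eq_add_one_of_ne_zero hk.ne'
  refine ⟨?_, ?_, ?_, ?_⟩
  · rw [diagCoupling, List.head?_map, List.range_succ_eq_map]
    rfl
  · rw [diagCoupling, List.getLast?_map, List.range_succ, List.getLast?_concat]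
    rfl
  · show List.IsChain _ _
    rw [diagCoupling, List.isChain_map, List.isChain_range_succ]
    exact fun _ _ => Or.inr (Or.inr ⟨rfl, rfl⟩)
  · simp [diagCoupling]

lemma IsCoupling.exists_mem {k l : ℕ} {c : List (ℕ × ℕ)} (hc : IsCoupling k l c) {i : ℕ}
    (hi : i < k) : ∃ j, (i, j) ∈ c := by
  obtain ⟨hhead, hlast, hchain, -⟩ := hc
  by_contra! hnot
  -- the first indices start at `0` and grow by at most one per step, so they cannot jump over `i`
  have hlt : ∀ p ∈ c, p.1 < i := by
    refine (List.IsChain.iff_mem.1 hchain).induction _ _ ?_ ?_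
    · rintro x y ⟨-, hy, hxy⟩ hx
      have : y.1 ≠ i := fun h => hnot y.2 (h ▸ hy)
      rcases hxy with ⟨h, -⟩ | ⟨h, -⟩ | ⟨h, -⟩ <;> omega
    · intro hne
      have h0 : c.head hne = (0, 0) := by simpa [List.head?_eq_some_head hne] using hhead
      have : (c.head hne).1 ≠ i := fun h => hnot (c.head hne).2 (h ▸ List.head_mem hne)
      rw [h0] at this ⊢
      exact Nat.pos_of_ne_zero this.symm
  have := hlt _ (List.mem_of_getLast? hlast)
  omega

lemma dDF_nonneg (P Q : List (Pt d)) : 0 ≤ dDF P Q :=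
  Real.sInf_nonneg (by rintro _ ⟨c, -, rfl⟩; exact couplingCost_nonneg P Q c)

lemma dDF_le_couplingCost {P Q : List (Pt d)} {c : List (ℕ × ℕ)}
    (hc : IsCoupling P.length Q.length c) : dDF P Q ≤ couplingCost P Q c :=
  csInf_le ⟨0, by rintro _ ⟨c, -, rfl⟩; exact couplingCost_nonneg P Q c⟩ ⟨c, hc, rfl⟩

lemma dDF_le_of_forall_dist_getD_le {P Q : List (Pt d)} (hlen : P.length = Q.length)
    (hpos : 0 < P.length) {v : ℝ} (h : ∀ i < P.length, dist (P.getD i 0) (Q.getD i 0) ≤ v) :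
    dDF P Q ≤ v := by
  refine (dDF_le_couplingCost (c := diagCoupling P.length) ?_).trans ?_
  · simpa [hlen] using isCoupling_diagCoupling hpos
  · refine couplingCost_le P Q (dist_nonneg.trans (h 0 hpos)) ?_
    simp only [diagCoupling, List.mem_map, List.mem_range]
    rintro _ ⟨i, hi, rfl⟩
    exact h i hi

lemma le_dDF_of_forall_le_dist_getD {P Q : List (Pt d)} (hlen : P.length = Q.length) {i : ℕ}
    (hi : i < P.length) {v : ℝ} (h : ∀ j < Q.length, v ≤ dist (P.getD i 0) (Q.getD j 0)) :
    v ≤ dDF P Q := by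
  refine le_csInf ⟨_, diagCoupling P.length, ?_, rfl⟩ ?_
  · simpa [hlen] using isCoupling_diagCoupling (Nat.zero_lt_of_lt hi)
  · rintro _ ⟨c, hc, rfl⟩
    obtain ⟨j, hj⟩ := hc.exists_mem hi
    have hcost := dist_getD_le_couplingCost P Q hj
    exact (h j (hc.2.2.2 _ hj).2).trans hcost

end Coupling

lemma dist_e1 (a b : ℝ) : dist (e1 a) (e1 b) = |a - b| := by
  simp [EuclideanSpace.dist_eq, e1, Real.dist_eq, Real.sqrt_sq_eq_abs]

lemma e1_injective : Injective e1 := fun a b h => by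
  simpa [sub_eq_zero] using (dist_e1 a b).symm.trans (dist_eq_zero.2 h)

section Banded

variable {k : ℕ}

def banded (L : ℝ) (X : Fin k → ℝ) : List (Pt 1) :=
  List.ofFn fun i => e1 (L * (i : ℕ) + X i)

@[simp]
lemma length_banded (L : ℝ) (X : Fin k → ℝ) : (banded L X).length = k :=
  List.length_ofFn

lemma getD_banded (L : ℝ) (X : Fin k → ℝ) {i : ℕ} (hi : i < k) :
    (banded L X).getD i 0 = e1 (L * i + X ⟨i, hi⟩) := by
  rw [banded, List.getD_eq_getElem _ _ (by simpa using hi), List.getElem_ofFn]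

lemma banded_injective (L : ℝ) : Injective (banded (k := k) L) := by
  intro X Y h
  funext i
  simpa using e1_injective (congrFun (List.ofFn_inj.1 h) i)

theorem dDF_banded (hk : 0 < k) {L r : ℝ} (hL : 4 * r ≤ L) {X Y : Fin k → ℝ}
    (hX : ∀ i, |X i| ≤ r) (hY : ∀ i, |Y i| ≤ r) :
    dDF (banded L X) (banded L Y) = dist X Y := by
  apply le_antisymm
  · refine dDF_le_of_forall_dist_getD_le (by simp) (by simpa) fun i hi => ?_
    simp only [length_banded] at hi
    rw [getD_banded L X hi, getD_banded L Y hi, dist_e1, add_sub_add_left_eq_sub, ← Real.dist_eq]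
    exact dist_le_pi_dist X Y ⟨i, hi⟩
  refine (dist_pi_le_iff (dDF_nonneg _ _)).2 fun i => ?_
  refine le_dDF_of_forall_le_dist_getD (by simp) (i := i) (by simp) fun j hj => ?_
  simp only [length_banded] at hj
  rw [getD_banded L X i.isLt, getD_banded L Y hj, dist_e1, Real.dist_eq]
  obtain rfl | hne := eq_or_ne j i
  · rw [add_sub_add_left_eq_sub]
  have hXi := abs_le.1 (hX i)
  have hYi := abs_le.1 (hY i)
  have hYj := abs_le.1 (hY ⟨j, hj⟩)
  have hL0 : 0 ≤ L := by linarith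
  have hdiag : |X i - Y i| ≤ 2 * r := abs_le.2 ⟨by linarith, by linarith⟩
  -- off the diagonal the spacing alone costs at least `L - 2 * r ≥ 2 * r`
  rcases Nat.lt_or_gt_of_ne hne with hlt | hlt
  · have : L * j + L ≤ L * i := by
      rw [← mul_add_one]; exact mul_le_mul_of_nonneg_left (by exact_mod_cast hlt) hL0
    exact hdiag.trans (le_abs.2 (Or.inl (by linarith)))
  · have : L * i + L ≤ L * j := by
      rw [← mul_add_one]; exact mul_le_mul_of_nonneg_left (by exact_mod_cast hlt) hL0
    exact hdiag.trans (le_abs.2 (Or.inr (by linarith)))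

end Banded

section NearestNeighbors

variable {d : ℕ} {ι κ : Type*} [Fintype ι]

lemma NN_map_eq_image (site : ι ↪ List (Pt d)) (Q : List (Pt d)) {ℓ : ℝ} {near : Set ι}
    (hlow : ∀ s, ℓ ≤ dDF Q (site s)) (hnear : ∀ s, dDF Q (site s) ≤ ℓ ↔ s ∈ near)
    (hne : near.Nonempty) : NN (univ.map site) Q = site '' near := by
  ext P
  simp only [NN, mem_map, mem_univ, true_and, Set.mem_ofPred_eq, Set.mem_image]
  constructor
  · rintro ⟨⟨s, rfl⟩, hmin⟩
    obtain ⟨s₀, hs₀⟩ := hne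
    exact ⟨s, (hnear s).1 ((hmin _ ⟨s₀, rfl⟩).trans ((hnear s₀).2 hs₀)), rfl⟩
  · rintro ⟨s, hs, rfl⟩
    refine ⟨⟨s, rfl⟩, ?_⟩
    rintro _ ⟨s', rfl⟩
    exact ((hnear s).2 hs).trans (hlow s')

lemma injective_NN_map (site : ι ↪ List (Pt d)) (query : κ → List (Pt d)) (level : κ → ℝ)
    {near : κ → Set ι} (hlow : ∀ f s, level f ≤ dDF (query f) (site s))
    (hnear : ∀ f s, dDF (query f) (site s) ≤ level f ↔ s ∈ near f)
    (hne : ∀ f, (near f).Nonempty) (hinj : Injective near) :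
    Injective fun f => NN (univ.map site) (query f) := by
  intro f g h
  simp only [NN_map_eq_image site _ (hlow _) (hnear _) (hne _)] at h
  exact hinj (Set.image_injective.2 site.injective h)

lemma exists_curves_of_injective_NN {k m N : ℕ} (hcard : Fintype.card ι = N)
    (site : ι ↪ List (Pt d)) (hsite : ∀ s, (site s).length = k)
    (query : (Fin k → Fin m) → List (Pt d)) (hquery : ∀ f, (query f).length = k)
    (hNN : Injective fun f => NN (univ.map site) (query f)) :
    ∃ S : Finset (List (Pt d)), S.card = N ∧ (∀ P ∈ S, P.length = k) ∧
      ∃ Q : Fin (m ^ k) → List (Pt d),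
        (∀ i, (Q i).length = k) ∧ Injective (fun i => NN S (Q i)) := by
  exact ⟨univ.map site, by simp [hcard], by simp [hsite],
    fun i => query (finFunctionFinEquiv.symm i), fun _ => hquery _,
    hNN.comp finFunctionFinEquiv.symm.injective⟩

end NearestNeighbors

section PointSites

variable {k m : ℕ}

def pointOffset (f : Fin k → Fin m) : Fin k → ℝ := fun i => (f i : ℕ)

lemma pointOffset_injective : Injective (pointOffset (k := k) (m := m)) :=
  fun _ _ h => funext fun i => Fin.ext (Nat.cast_injective (congrFun h i))

def pointCurve : (Fin k → Fin m) ↪ List (Pt 1) :=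
  ⟨fun f => banded (4 * m) (pointOffset f), (banded_injective _).comp pointOffset_injective⟩

lemma dDF_pointCurve (hk : 0 < k) (f g : Fin k → Fin m) :
    dDF (pointCurve f) (pointCurve g) = dist (pointOffset f) (pointOffset g) := by
  have hbound (f : Fin k → Fin m) (i : Fin k) : |pointOffset f i| ≤ m := by
    rw [pointOffset, abs_of_nonneg (Nat.cast_nonneg _)]
    exact_mod_cast (f i).isLt.le
  exact dDF_banded hk le_rfl (hbound f) (hbound g)

lemma injective_NN_pointCurve (hk : 0 < k) :
    Injective fun f : Fin k → Fin m =>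
      NN (univ.map (pointCurve (k := k) (m := m))) (pointCurve f) := by
  refine injective_NN_map pointCurve pointCurve 0 (near := fun f => {f})
    (fun _ _ => dDF_nonneg _ _) (fun f g => ?_) (fun _ => Set.singleton_nonempty _)
    Set.singleton_injective
  rw [dDF_pointCurve hk, Pi.zero_apply, dist_le_zero, pointOffset_injective.eq_iff, eq_comm,
    Set.mem_singleton_iff]

end PointSites

lemma abs_single_le {ι α : Type*} [DecidableEq ι] [AddCommGroup α] [LinearOrder α]
    [IsOrderedAddMonoid α] (a : ι) (v : α) (i : ι) : |(Pi.single a v : ι → α) i| ≤ |v| := by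
  rcases eq_or_ne i a with rfl | hi
  · simp
  · simp [Pi.single_eq_of_ne hi]

lemma forall_abs_sub_single_le_iff {ι α : Type*} [DecidableEq ι] [AddCommGroup α] [LinearOrder α]
    [IsOrderedAddMonoid α] {x : ι → α} {ℓ : α} (hx : ∀ i, |x i| ≤ ℓ) (a : ι) (v : α) :
    (∀ i, |x i - (Pi.single a v : ι → α) i| ≤ ℓ) ↔ |x a - v| ≤ ℓ := by
  refine ⟨fun h => by simpa using h a, fun h i => ?_⟩
  rcases eq_or_ne i a with rfl | hi
  · simpa using h
  · simpa [Pi.single_eq_of_ne hi] using hx i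

lemma dist_intCast_le_iff {ι : Type*} [Fintype ι] {x y : ι → ℤ} {ℓ : ℤ} (hℓ : 0 ≤ ℓ) :
    dist (fun i => (x i : ℝ)) (fun i => (y i : ℝ)) ≤ ℓ ↔ ∀ i, |x i - y i| ≤ ℓ := by
  rw [dist_pi_le_iff (by exact_mod_cast hℓ)]
  simp only [Real.dist_eq, ← Int.cast_sub, ← Int.cast_abs, Int.cast_le]

lemma abs_sub_neg_two_mul_add_le_iff {m a t c : ℕ} (ha : a < m) (ht : t < m) :
    |(-m + a + m * c : ℤ) - (-2 * m + t)| ≤ m + m * c ↔ a ≤ t := by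
  have : 0 ≤ (m * c : ℤ) := by positivity
  rw [abs_le]
  omega

lemma abs_sub_two_mul_le_iff {m a t c : ℕ} (ha : a < m) :
    |(-m + a + m * c : ℤ) - 2 * m * t| ≤ m + m * c ↔ t ≤ c := by
  have hle : t ≤ c → (m * t : ℤ) ≤ m * c := fun h => by gcongr
  have hgt : c < t → (m * c + m : ℤ) ≤ m * t := fun h => by
    rw [← mul_add_one]
    gcongr
    omega
  rw [abs_le]
  constructor
  · rintro ⟨h, -⟩
    by_contra! hct
    linarith [hgt hct]
  · intro h
    constructor <;> nlinarith [hle h]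

section AnchoredSites

variable {m K : ℕ}

def anchorLevel (f : Fin (K + 2) → Fin m) : ℤ := m + m * (f (Fin.last _) : ℕ)

def queryOffset (f : Fin (K + 2) → Fin m) : Fin (K + 2) → ℤ :=
  Fin.lastCases (anchorLevel f) fun j => -m + (f j.castSucc : ℕ) + m * (f (Fin.last _) : ℕ)

def siteOffset (s : Fin (K + 2) × Fin m) : Fin (K + 2) → ℤ :=
  Fin.lastCases (Pi.single (0 : Fin (K + 1)).castSucc (2 * m * (s.2 : ℕ)))
    (fun j => Pi.single j.castSucc (-2 * m + (s.2 : ℕ))) s.1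

def nearSites (f : Fin (K + 2) → Fin m) : Set (Fin (K + 2) × Fin m) :=
  {s | Fin.lastCases (motive := fun _ => Prop) (s.2 ≤ f (Fin.last _))
    (fun j => f j.castSucc ≤ s.2) s.1}

lemma anchorLevel_le_sq (f : Fin (K + 2) → Fin m) : anchorLevel f ≤ m ^ 2 := by
  have : (m * (f (Fin.last _) : ℕ) + m : ℤ) ≤ m * m := by
    rw [← mul_add_one]
    gcongr
    exact_mod_cast (f (Fin.last _)).isLt
  rw [anchorLevel]
  linarith

lemma abs_queryOffset_le (f : Fin (K + 2) → Fin m) (i : Fin (K + 2)) :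
    |queryOffset f i| ≤ anchorLevel f := by
  have : 0 ≤ (m * (f (Fin.last _) : ℕ) : ℤ) := by positivity
  have := (f i).isLt
  induction i using Fin.lastCases with
  | last => simp only [queryOffset, Fin.lastCases_last, anchorLevel]; rw [abs_le]; omega
  | cast j => simp only [queryOffset, Fin.lastCases_castSucc, anchorLevel]; rw [abs_le]; omega

lemma abs_siteOffset_le (s : Fin (K + 2) × Fin m) (i : Fin (K + 2)) :
    |siteOffset s i| ≤ 2 * m ^ 2 := by
  obtain ⟨j, t⟩ := s
  have ht := t.isLt
  have : (m * t : ℤ) ≤ m * m := by gcongr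
  induction j using Fin.lastCases with
  | last =>
    simp only [siteOffset, Fin.lastCases_last]
    refine (abs_single_le _ _ _).trans ?_
    rw [abs_le]
    constructor <;> nlinarith
  | cast j =>
    simp only [siteOffset, Fin.lastCases_castSucc]
    refine (abs_single_le _ _ _).trans ?_
    rw [abs_le]
    constructor <;> nlinarith

lemma siteOffset_apply_last (s : Fin (K + 2) × Fin m) : siteOffset s (Fin.last _) = 0 := by
  obtain ⟨j, t⟩ := s
  induction j using Fin.lastCases <;> simp [siteOffset]

lemma siteOffset_injective : Injective (siteOffset (m := m) (K := K)) := by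
  rintro ⟨j, t⟩ ⟨j', t'⟩ h
  have ht := t.isLt
  have ht' := t'.isLt
  have h0 : (0 : ℤ) ≤ 2 * m * (t : ℕ) := by positivity
  have h0' : (0 : ℤ) ≤ 2 * m * (t' : ℕ) := by positivity
  induction j using Fin.lastCases <;> induction j' using Fin.lastCases <;>
    simp only [siteOffset, Fin.lastCases_last, Fin.lastCases_castSucc] at h
  · have hc := congrFun h (0 : Fin (K + 1)).castSucc
    simp only [Pi.single_eq_same, mul_eq_mul_left_iff] at hc
    grind
  · rename_i j'
    have hc := congrFun h j'.castSucc
    simp only [Pi.single_eq_same, Pi.single_apply, Fin.castSucc_inj] at hc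
    split_ifs at hc <;> omega
  · rename_i j
    have hc := congrFun h j.castSucc
    simp only [Pi.single_eq_same, Pi.single_apply, Fin.castSucc_inj] at hc
    split_ifs at hc <;> omega
  · rename_i j j'
    have hc := congrFun h j.castSucc
    simp only [Pi.single_eq_same, Pi.single_apply, Fin.castSucc_inj] at hc
    split_ifs at hc with hj
    · subst hj
      grind
    · omega

lemma forall_abs_sub_le_anchorLevel_iff (f : Fin (K + 2) → Fin m) (s : Fin (K + 2) × Fin m) :
    (∀ i, |queryOffset f i - siteOffset s i| ≤ anchorLevel f) ↔ s ∈ nearSites f := by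
  obtain ⟨j, t⟩ := s
  induction j using Fin.lastCases with
  | last =>
    simp only [siteOffset, Fin.lastCases_last, nearSites, Set.mem_ofPred_eq]
    rw [forall_abs_sub_single_le_iff (abs_queryOffset_le f), queryOffset, Fin.lastCases_castSucc,
      anchorLevel, abs_sub_two_mul_le_iff (f _).isLt, Fin.le_def]
  | cast j =>
    simp only [siteOffset, Fin.lastCases_castSucc, nearSites, Set.mem_ofPred_eq]
    rw [forall_abs_sub_single_le_iff (abs_queryOffset_le f), queryOffset, Fin.lastCases_castSucc,
      anchorLevel, abs_sub_neg_two_mul_add_le_iff (f _).isLt t.isLt, Fin.le_def]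

lemma nearSites_injective : Injective (nearSites (m := m) (K := K)) := by
  intro f g h
  have hmem (s) : s ∈ nearSites f ↔ s ∈ nearSites g := by rw [h]
  funext i
  induction i using Fin.lastCases with
  | last =>
    have h := fun t => hmem (Fin.last _, t)
    simp only [nearSites, Set.mem_ofPred_eq, Fin.lastCases_last] at h
    exact le_antisymm ((h _).1 le_rfl) ((h _).2 le_rfl)
  | cast j =>
    have h := fun t => hmem (j.castSucc, t)
    simp only [nearSites, Set.mem_ofPred_eq, Fin.lastCases_castSucc] at h
    exact le_antisymm ((h _).2 le_rfl) ((h _).1 le_rfl)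

end AnchoredSites

section AnchoredCurves

variable {m K : ℕ}

def anchoredQuery (f : Fin (K + 2) → Fin m) : List (Pt 1) :=
  banded (8 * m ^ 2) fun i => (queryOffset f i : ℝ)

def anchoredSite : Fin (K + 2) × Fin m ↪ List (Pt 1) :=
  ⟨fun s => banded (8 * m ^ 2) fun i => (siteOffset s i : ℝ),
    (banded_injective _).comp (Int.cast_injective.comp_left.comp siteOffset_injective)⟩

lemma dDF_anchoredQuery_anchoredSite (f : Fin (K + 2) → Fin m) (s : Fin (K + 2) × Fin m) :
    dDF (anchoredQuery f) (anchoredSite s) =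
      dist (fun i => (queryOffset f i : ℝ)) (fun i => (siteOffset s i : ℝ)) := by
  have hq (i) : |(queryOffset f i : ℝ)| ≤ 2 * m ^ 2 := by
    have : |queryOffset f i| ≤ 2 * m ^ 2 := (abs_queryOffset_le f i).trans
      ((anchorLevel_le_sq f).trans (by linarith [sq_nonneg (m : ℤ)]))
    exact_mod_cast this
  have hs (i) : |(siteOffset s i : ℝ)| ≤ 2 * m ^ 2 := by exact_mod_cast abs_siteOffset_le s i
  exact dDF_banded (by omega) (by linarith) hq hs

lemma anchorLevel_le_dDF (f : Fin (K + 2) → Fin m) (s : Fin (K + 2) × Fin m) :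
    (anchorLevel f : ℝ) ≤ dDF (anchoredQuery f) (anchoredSite s) := by
  rw [dDF_anchoredQuery_anchoredSite]
  refine le_trans (le_of_eq ?_) (dist_le_pi_dist _ _ (Fin.last _))
  rw [siteOffset_apply_last, queryOffset, Fin.lastCases_last, Real.dist_eq, Int.cast_zero,
    sub_zero, ← Int.cast_abs, abs_of_nonneg (by rw [anchorLevel]; positivity)]

lemma dDF_le_anchorLevel_iff (f : Fin (K + 2) → Fin m) (s : Fin (K + 2) × Fin m) :
    dDF (anchoredQuery f) (anchoredSite s) ≤ anchorLevel f ↔ s ∈ nearSites f := by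
  rw [dDF_anchoredQuery_anchoredSite, dist_intCast_le_iff (by rw [anchorLevel]; positivity),
    forall_abs_sub_le_anchorLevel_iff]

lemma injective_NN_anchoredQuery :
    Injective fun f : Fin (K + 2) → Fin m =>
      NN (univ.map (anchoredSite (m := m) (K := K))) (anchoredQuery f) :=
  injective_NN_map anchoredSite anchoredQuery (fun f => anchorLevel f) anchorLevel_le_dDF
    dDF_le_anchorLevel_iff (fun f => ⟨(Fin.last _, f (Fin.last _)), by simp [nearSites]⟩)
    nearSites_injective

end AnchoredCurves

/-- for `k ∣ n` there are `n` curves in `ℝ¹` with `k` vertices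
each, together with `(n/k)^k` query curves having pairwise distinct
nearest-neighbor sets; hence the Voronoi diagram under the discrete Fréchet
distance has at least `(n/k)^k` regions. -/
theorem voronoi_lower_bound_dim_one (n k : ℕ) (hk : 0 < k) (hdvd : k ∣ n) :
    ∃ S : Finset (List (Pt 1)), S.card = n ∧ (∀ P ∈ S, P.length = k) ∧
      ∃ Q : Fin ((n / k) ^ k) → List (Pt 1),
        (∀ i, (Q i).length = k) ∧
        Function.Injective (fun i => NN S (Q i)) := by
  obtain rfl | ⟨K, rfl⟩ : k = 1 ∨ ∃ K, k = K + 2 := by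
    rcases k with _ | _ | K <;> simp_all
  · rw [Nat.div_one]
    exact exists_curves_of_injective_NN (by simp) pointCurve (fun _ => length_banded _ _)
      pointCurve (fun _ => length_banded _ _) (injective_NN_pointCurve one_pos)
  · exact exists_curves_of_injective_NN (by simp [Nat.mul_div_cancel' hdvd]) anchoredSite
      (fun _ => length_banded _ _) anchoredQuery (fun _ => length_banded _ _)
      injective_NN_anchoredQuery
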